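/- arXiv:2410.20385 — 3 statements merged into one kernel-verified Lean document; each statement's English description precedes it below -/
import Mathlib

section
/- For a real number a with 0 < a ≤ 1 and an integer n ≥ 0, the Hurwitz zeta function satisfies ζ(a, -n) = -B_{n+1}(a)/(n+1), where ζ(a,s) is the analytic continuation of Σ_{m≥0} 1/(m+a)^s. -/
open Complex Real HurwitzZeta

/-!
For `n ≥ 1` this is `HurwitzZeta.hurwitzZeta_neg_nat`, so the content is `ζ(a, 0) = 1/2 - a`.
For `Re s > 1`, summing the convexity defects
`a (n+1+a)^{-s} + (1-a) (n+2+a)^{-s} - (n+2)^{-s}` of `x ↦ x^{-s}` (note that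
`n + 2 = a (n+1+a) + (1-a) (n+2+a)`) gives `ζ(a,s) - ζ(s) - a^{-s} + 1 - (1-a) (1+a)^{-s}`.
A second-order Taylor estimate bounds the `n`-th defect by `|s| |s+1| (n+1)^{-Re s - 2}`, so the
series is holomorphic on `Re s > -1` and the identity persists there. At `s = 0` every defect
vanishes, and `ζ(0) = -1/2`.
-/

open Set

section SecondOrder

variable {E : Type*} [NormedAddCommGroup E] [NormedSpace ℝ E] {f f' f'' : ℝ → E} {s : Set ℝ}
  {M : ℝ}

theorem Convex.norm_image_sub_image_sub_smul_le (hs : Convex ℝ s)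
    (hf : ∀ x ∈ s, HasDerivWithinAt f (f' x) s x) (hf' : ∀ x ∈ s, HasDerivWithinAt f' (f'' x) s x)
    (hM : ∀ x ∈ s, ‖f'' x‖ ≤ M) {m x : ℝ} (hm : m ∈ s) (hx : x ∈ s) :
    ‖f x - f m - (x - m) • f' m‖ ≤ M * (x - m) ^ 2 := by
  have hsub : uIcc m x ⊆ s := hs.ordConnected.uIcc_subset hm hx
  have hderiv : ∀ y ∈ uIcc m x,
      HasDerivWithinAt (fun y => f y - (y - m) • f' m) (f' y - f' m) (uIcc m x) y := by
    intro y hy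
    have := ((hasDerivAt_id y).sub_const m).smul_const (f' m)
    simpa using ((hf y (hsub hy)).mono hsub).fun_sub this.hasDerivWithinAt
  have hbound : ∀ y ∈ uIcc m x, ‖f' y - f' m‖ ≤ M * |x - m| := fun y hy =>
    calc ‖f' y - f' m‖ ≤ M * ‖y - m‖ :=
          hs.norm_image_sub_le_of_norm_hasDerivWithin_le hf' hM hm (hsub hy)
      _ ≤ M * |x - m| := by
          gcongr
          · exact (norm_nonneg _).trans (hM m hm)
          · exact abs_sub_left_of_mem_uIcc hy
  have := (convex_uIcc m x).norm_image_sub_le_of_norm_hasDerivWithin_le hderiv hbound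
    left_mem_uIcc right_mem_uIcc
  simpa [Real.norm_eq_abs, mul_assoc, ← sq, sub_right_comm (f x)] using this

theorem Convex.norm_smul_add_smul_sub_image_le (hs : Convex ℝ s)
    (hf : ∀ x ∈ s, HasDerivWithinAt f (f' x) s x) (hf' : ∀ x ∈ s, HasDerivWithinAt f' (f'' x) s x)
    (hM : ∀ x ∈ s, ‖f'' x‖ ≤ M) {x y t : ℝ} (hx : x ∈ s) (hy : y ∈ s) (ht₀ : 0 ≤ t)
    (ht₁ : t ≤ 1) :
    ‖t • f x + (1 - t) • f y - f (t * x + (1 - t) * y)‖ ≤ M * t * (1 - t) * (y - x) ^ 2 := by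
  set m := t * x + (1 - t) * y
  have hm : m ∈ s := hs hx hy ht₀ (sub_nonneg.2 ht₁) (add_sub_cancel t 1)
  have key : t • f x + (1 - t) • f y - f m =
      t • (f x - f m - (x - m) • f' m) + (1 - t) • (f y - f m - (y - m) • f' m) := by
    simp only [m]
    module
  calc ‖t • f x + (1 - t) • f y - f m‖
      ≤ t * (M * (x - m) ^ 2) + (1 - t) * (M * (y - m) ^ 2) := by
        rw [key]
        refine (norm_add_le _ _).trans ?_
        rw [norm_smul, norm_smul, Real.norm_of_nonneg ht₀, Real.norm_of_nonneg (sub_nonneg.2 ht₁)]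
        gcongr
        · exact hs.norm_image_sub_image_sub_smul_le hf hf' hM hm hx
        · exact hs.norm_image_sub_image_sub_smul_le hf hf' hM hm hy
    _ = M * t * (1 - t) * (y - x) ^ 2 := by ring

end SecondOrder

theorem hasDerivAt_ofReal_cpow_const_of_pos {x : ℝ} (hx : 0 < x) (c : ℂ) :
    HasDerivAt (fun y : ℝ => (y : ℂ) ^ c) (c * x ^ (c - 1)) x :=
  (hasStrictDerivAt_cpow_const (ofReal_mem_slitPlane.2 hx)).hasDerivAt.comp_ofReal

theorem differentiable_ofReal_cpow_neg {x : ℝ} (hx : x ≠ 0) :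
    Differentiable ℂ fun s : ℂ => (x : ℂ) ^ (-s) :=
  differentiable_neg.const_cpow (Or.inl (ofReal_ne_zero.2 hx))

noncomputable def hurwitzDefect (a : ℝ) (s : ℂ) (n : ℕ) : ℂ :=
  a * (n + 1 + a : ℂ) ^ (-s) + (1 - a) * (n + 2 + a : ℂ) ^ (-s) - (n + 2 : ℂ) ^ (-s)

theorem hurwitzDefect_zero (a : ℝ) (n : ℕ) : hurwitzDefect a 0 n = 0 := by
  simp only [hurwitzDefect, neg_zero, cpow_zero]
  ring

theorem hasSum_hurwitzDefect {a : ℝ} (ha : a ∈ Icc 0 1) {s : ℂ} (hs : 1 < s.re) :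
    HasSum (hurwitzDefect a s) (hurwitzZeta a s - riemannZeta s - (a : ℂ) ^ (-s) + 1 -
      (1 - a) * (1 + a : ℂ) ^ (-s)) := by
  have hζa : HasSum (fun n : ℕ => (n + a : ℂ) ^ (-s)) (hurwitzZeta a s) := by
    simpa only [cpow_neg, one_div] using hasSum_hurwitzZeta_of_one_lt_re ha hs
  have hζ : HasSum (fun n : ℕ => (n + 1 : ℂ) ^ (-s)) (riemannZeta s) := by
    have := hasSum_hurwitzZeta_of_one_lt_re (a := 1) (right_mem_Icc.2 zero_le_one) hs
    simpa only [AddCircle.coe_period, hurwitzZeta_zero, cpow_neg, one_div, ofReal_one] using this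
  have h₁ : HasSum (fun n : ℕ => (n + 1 + a : ℂ) ^ (-s)) (hurwitzZeta a s - (a : ℂ) ^ (-s)) := by
    simpa using (hasSum_nat_add_iff' 1).mpr hζa
  have h₂ : HasSum (fun n : ℕ => (n + 2 + a : ℂ) ^ (-s))
      (hurwitzZeta a s - (a : ℂ) ^ (-s) - (1 + a : ℂ) ^ (-s)) := by
    simpa [Finset.sum_range_succ, sub_sub] using (hasSum_nat_add_iff' 2).mpr hζa
  have h₃ : HasSum (fun n : ℕ => (n + 2 : ℂ) ^ (-s)) (riemannZeta s - 1) := by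
    simpa [add_assoc, one_add_one_eq_two] using (hasSum_nat_add_iff' 1).mpr hζ
  rw [show hurwitzZeta a s - riemannZeta s - (a : ℂ) ^ (-s) + 1 - (1 - a) * (1 + a : ℂ) ^ (-s) =
    a * (hurwitzZeta a s - (a : ℂ) ^ (-s)) +
      (1 - a) * (hurwitzZeta a s - (a : ℂ) ^ (-s) - (1 + a : ℂ) ^ (-s)) - (riemannZeta s - 1)
    by ring]
  exact ((h₁.mul_left (a : ℂ)).add (h₂.mul_left (1 - (a : ℂ)))).sub h₃

theorem norm_hurwitzDefect_le {a : ℝ} (ha₀ : 0 ≤ a) (ha₁ : a ≤ 1) {s : ℂ} (hs : -2 ≤ s.re)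
    (n : ℕ) :
    ‖hurwitzDefect a s n‖ ≤ ‖s‖ * ‖s + 1‖ * (n + 1) ^ (-s.re - 2) * a * (1 - a) := by
  have hpos : ∀ x ∈ Ici ((n : ℝ) + 1), 0 < x := fun x hx => n.cast_add_one_pos.trans_le hx
  have hf : ∀ x ∈ Ici ((n : ℝ) + 1), HasDerivWithinAt (fun y : ℝ => (y : ℂ) ^ (-s))
      (-s * x ^ (-s - 1)) (Ici ((n : ℝ) + 1)) x := fun x hx =>
    (hasDerivAt_ofReal_cpow_const_of_pos (hpos x hx) _).hasDerivWithinAt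
  have hf' : ∀ x ∈ Ici ((n : ℝ) + 1), HasDerivWithinAt (fun y : ℝ => -s * (y : ℂ) ^ (-s - 1))
      (-s * ((-s - 1) * x ^ (-s - 1 - 1))) (Ici ((n : ℝ) + 1)) x := fun x hx =>
    ((hasDerivAt_ofReal_cpow_const_of_pos (hpos x hx) _).const_mul _).hasDerivWithinAt
  have hM : ∀ x ∈ Ici ((n : ℝ) + 1), ‖-s * ((-s - 1) * (x : ℂ) ^ (-s - 1 - 1))‖ ≤
      ‖s‖ * ‖s + 1‖ * (n + 1) ^ (-s.re - 2) := by
    intro x hx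
    have hnorm : ‖-s - 1‖ = ‖s + 1‖ := by rw [← norm_neg]; ring_nf
    rw [norm_mul, norm_mul, norm_neg, hnorm, norm_cpow_eq_rpow_re_of_pos (hpos x hx), ← mul_assoc]
    gcongr
    rw [show (-s - 1 - 1).re = -s.re - 2 by simp only [sub_re, neg_re, one_re]; ring]
    exact Real.rpow_le_rpow_of_nonpos (hpos _ self_mem_Ici) hx (by linarith)
  have := (convex_Ici _).norm_smul_add_smul_sub_image_le hf hf' hM
    (mem_Ici.2 (by linarith) : (n : ℝ) + 1 + a ∈ _) (mem_Ici.2 (by linarith) : (n : ℝ) + 2 + a ∈ _)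
    ha₀ ha₁
  rw [show a * ((n : ℝ) + 1 + a) + (1 - a) * (n + 2 + a) = n + 2 by ring,
    show (n : ℝ) + 2 + a - (n + 1 + a) = 1 by ring, one_pow, mul_one] at this
  simpa only [hurwitzDefect, real_smul, ofReal_add, ofReal_natCast, ofReal_one, ofReal_sub,
    ofReal_ofNat] using this

theorem differentiableOn_tsum_hurwitzDefect {a : ℝ} (ha₀ : 0 ≤ a) (ha₁ : a ≤ 1) :
    DifferentiableOn ℂ (fun s => ∑' n, hurwitzDefect a s n) {s | -1 < s.re} := by
  intro s₀ (hs₀ : -1 < s₀.re)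
  set σ := (s₀.re - 1) / 2
  have hσ : -1 < σ ∧ σ < s₀.re := by constructor <;> simp only [σ] <;> linarith
  set V := {s : ℂ | σ < s.re ∧ ‖s‖ < ‖s₀‖ + 1}
  have hV : IsOpen V :=
    (isOpen_lt continuous_const continuous_re).inter (isOpen_lt continuous_norm continuous_const)
  have hs₀V : s₀ ∈ V := ⟨hσ.2, lt_add_one _⟩
  have hdiff : DifferentiableOn ℂ (fun s => ∑' n, hurwitzDefect a s n) V := by
    refine differentiableOn_tsum_of_summable_norm
      (u := fun n : ℕ => (‖s₀‖ + 1) * (‖s₀‖ + 2) * ((n : ℝ) + 1) ^ (-σ - 2) * a * (1 - a))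
      ?_ (fun n => ?_) hV (fun n s hs => ?_)
    · have := (summable_nat_add_iff 1).2
        (Real.summable_nat_rpow.2 (by linarith [hσ.1] : -σ - 2 < -1))
      push_cast at this
      exact ((this.mul_left _).mul_right _).mul_right _
    · have h₁ := differentiable_ofReal_cpow_neg (by positivity : (n : ℝ) + 1 + a ≠ 0)
      have h₂ := differentiable_ofReal_cpow_neg (by positivity : (n : ℝ) + 2 + a ≠ 0)
      have h₃ := differentiable_ofReal_cpow_neg (by positivity : (n : ℝ) + 2 ≠ 0)
      push_cast at h₁ h₂ h₃
      unfold hurwitzDefect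
      fun_prop
    · refine (norm_hurwitzDefect_le ha₀ ha₁ (by linarith [hs.1, hσ.1]) n).trans ?_
      have hs' : ‖s + 1‖ ≤ ‖s₀‖ + 2 := (norm_add_le _ _).trans (by rw [norm_one]; linarith [hs.2])
      gcongr
      · exact hs.2.le
      · exact le_add_of_nonneg_left n.cast_nonneg
      · linarith [hs.1]
  exact (hdiff.differentiableAt (hV.mem_nhds hs₀V)).differentiableWithinAt

theorem hurwitzZeta_apply_zero_of_pos {a : ℝ} (ha₀ : 0 < a) (ha₁ : a ≤ 1) :
    hurwitzZeta a 0 = 1 / 2 - a := by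
  set Ω := {s : ℂ | -1 < s.re}
  have hΩ : IsOpen Ω := isOpen_lt continuous_const continuous_re
  set F := fun s => hurwitzZeta a s - riemannZeta s - (a : ℂ) ^ (-s) + 1 -
    (1 - a) * (1 + a : ℂ) ^ (-s)
  have hF : Differentiable ℂ F := by
    have hζ := differentiable_hurwitzZeta_sub_hurwitzZeta a 0
    rw [hurwitzZeta_zero] at hζ
    have h₁ := differentiable_ofReal_cpow_neg ha₀.ne'
    have h₂ := differentiable_ofReal_cpow_neg (by positivity : 1 + a ≠ 0)
    push_cast at h₂
    fun_prop
  have heq : EqOn F (fun s => ∑' n, hurwitzDefect a s n) Ω := by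
    refine (hF.differentiableOn.analyticOnNhd hΩ).eqOn_of_preconnected_of_eventuallyEq
      ((differentiableOn_tsum_hurwitzDefect ha₀.le ha₁).analyticOnNhd hΩ)
      (convex_halfSpace_re_gt (-1)).isPreconnected (by norm_num : -1 < (2 : ℂ).re) ?_
    filter_upwards [(isOpen_lt continuous_const continuous_re).mem_nhds
      (show (1 : ℝ) < (2 : ℂ).re by norm_num)] with s hs
    exact (hasSum_hurwitzDefect ⟨ha₀.le, ha₁⟩ hs).tsum_eq.symm
  have h₀ := heq (by norm_num : -1 < (0 : ℂ).re)
  simp only [F, neg_zero, cpow_zero, riemannZeta_zero, hurwitzDefect_zero, tsum_zero] at h₀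
  linear_combination h₀

/-- For `0 < a ≤ 1` and an integer `n ≥ 0`, the Hurwitz zeta function (the analytic
continuation of `∑_{m ≥ 0} (m+a)^{-s}`) satisfies `ζ(a, -n) = -B_{n+1}(a)/(n+1)`. -/
theorem hurwitzZeta_neg_nat_eq_bernoulli (a : ℝ) (ha0 : 0 < a) (ha1 : a ≤ 1) (n : ℕ) :
    hurwitzZeta (a : UnitAddCircle) (-(n : ℂ)) =
      -(Polynomial.aeval (a : ℂ) (Polynomial.bernoulli (n + 1))) / (n + 1) := by
  rcases eq_or_ne n 0 with rfl | hn
  · rw [Nat.cast_zero, neg_zero, hurwitzZeta_apply_zero_of_pos ha0 ha1]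
    simp [Polynomial.bernoulli_one]
  · rw [hurwitzZeta_neg_nat hn ⟨ha0.le, ha1⟩, Polynomial.eval_map, ← Polynomial.aeval_def]
    ring
end

section
/- Let m ≥ 2 and define 𝔻_m = D_{-m}^+ ∘ D_{-m-1}^+ ∘ ... ∘ D_{-2m+2}^+ (composition of Maass raising operators D_k^+ = k + (τ-τ̄)∂_τ, with indices decreasing from -m at the outside). Then 𝔻_m(τ^{2m-1}) = (m-1)! Σ_{r=0}^{m-1} (-1)^r C(2m-1, r) τ^{2m-1-r} τ̄^r, where C(2m-1,r) is the binomial coefficient. -/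
/-!
On monomials `D_k⁺(τ^{n-r} τ̄^r) = (k+n-r) τ^{n-r} τ̄^r - (n-r) τ^{n-r-1} τ̄^{r+1}`, and
`-(n-r)(-1)^r C(n,r) = (r+1)(-1)^{r+1} C(n,r+1)`. So on the sum `T_s` of the first `s` terms of
`(τ - τ̄)^n` the lowering parts telescope: `D_k⁺ T_s = (k+n) T_s + s · (term s)`, which for
`k = s - n` is `s · T_{s+1}`. Starting from `τ^n = T_1` with `n = 2m-1`, the `m-1` operators
`D_{1-n}⁺, D_{2-n}⁺, …, D_{-m}⁺` of `𝔻_m` thus produce `(m-1)! · T_m`.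
-/

open MvPolynomial

/-- The Maass raising operator `D_k⁺ = k + (τ - τ̄)∂_τ`, realized on polynomials in
`τ = X 0` and `τ̄ = X 1`. -/
noncomputable def Dop (k : ℤ) (P : MvPolynomial (Fin 2) ℂ) : MvPolynomial (Fin 2) ℂ :=
  (k : ℂ) • P + (X 0 - X 1) * pderiv 0 P

/-- `𝔻_{k,p} = D_k⁺ ∘ D_{k-1}⁺ ∘ ⋯ ∘ D_{k-p}⁺`. -/
noncomputable def Dcomp (k : ℤ) : ℕ → MvPolynomial (Fin 2) ℂ → MvPolynomial (Fin 2) ℂ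
  | 0 => Dop k
  | p + 1 => Dop k ∘ Dcomp (k - 1) p

section Dop

variable (k : ℤ)

theorem Dop_zero : Dop k 0 = 0 := by
  simp [Dop]

theorem Dop_add (P Q : MvPolynomial (Fin 2) ℂ) : Dop k (P + Q) = Dop k P + Dop k Q := by
  simp only [Dop, smul_add, map_add, mul_add]
  abel

theorem Dop_smul (c : ℂ) (P : MvPolynomial (Fin 2) ℂ) : Dop k (c • P) = c • Dop k P := by
  rw [Dop, Dop, Derivation.map_smul, mul_smul_comm, smul_add, smul_comm (k : ℂ) c]

theorem Dop_X_pow_mul_X_pow (a b : ℕ) :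
    Dop k ((X 0 : MvPolynomial (Fin 2) ℂ) ^ a * X 1 ^ b) =
      ((k : ℂ) + a) • (X 0 ^ a * X 1 ^ b) - (a : ℂ) • (X 0 ^ (a - 1) * X 1 ^ (b + 1)) := by
  cases a with
  | zero => simp [Dop, pderiv_X_of_ne (show (1 : Fin 2) ≠ 0 by decide)]
  | succ a =>
    simp only [Dop, pderiv_mul, pderiv_pow, pderiv_X_self,
      pderiv_X_of_ne (show (1 : Fin 2) ≠ 0 by decide), Nat.add_sub_cancel, Nat.cast_add,
      Nat.cast_one, Algebra.smul_def, map_add, map_one, map_natCast]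
    ring

end Dop

noncomputable def subPowTerm (n r : ℕ) : MvPolynomial (Fin 2) ℂ :=
  ((-1 : ℂ) ^ r * (n.choose r : ℂ)) • (X 0 ^ (n - r) * X 1 ^ r)

/-- The sum of the first `s` terms of the binomial expansion of `(τ - τ̄)^n`. -/
noncomputable def subPowTrunc (n s : ℕ) : MvPolynomial (Fin 2) ℂ :=
  ∑ r ∈ Finset.range s, subPowTerm n r

theorem subPowTrunc_one (n : ℕ) : subPowTrunc n 1 = X 0 ^ n := by
  simp [subPowTrunc, subPowTerm]

theorem subPowTrunc_succ (n s : ℕ) :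
    subPowTrunc n (s + 1) = subPowTrunc n s + subPowTerm n s :=
  Finset.sum_range_succ _ _

theorem neg_one_pow_mul_choose_mul_sub (n s : ℕ) (hs : s ≤ n) :
    -((-1 : ℂ) ^ s * n.choose s * ((n : ℂ) - s)) =
      (-1 : ℂ) ^ (s + 1) * n.choose (s + 1) * (s + 1) := by
  have h : (n.choose (s + 1) * (s + 1) : ℂ) = n.choose s * ((n : ℂ) - s) := by
    rw [← Nat.cast_sub hs]
    exact_mod_cast Nat.choose_succ_right_eq n s
  linear_combination -(-1 : ℂ) ^ (s + 1) * h

theorem Dop_subPowTrunc (k : ℤ) {n s : ℕ} (hs : s ≤ n) :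
    Dop k (subPowTrunc n s) =
      ((k : ℂ) + n) • subPowTrunc n s + (s : ℂ) • subPowTerm n s := by
  induction s with
  | zero => simp [subPowTrunc, Dop_zero]
  | succ s ih =>
    have hcoef := neg_one_pow_mul_choose_mul_sub n s (by omega)
    rw [subPowTrunc_succ, Dop_add, ih (by omega)]
    simp only [subPowTerm, Dop_smul, Dop_X_pow_mul_X_pow, Nat.sub_sub,
      Nat.cast_sub (by omega : s ≤ n)]
    push_cast
    linear_combination (norm := module)
      hcoef • (X 0 ^ (n - (s + 1)) * X 1 ^ (s + 1) : MvPolynomial (Fin 2) ℂ)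

theorem Dop_subPowTrunc_of_eq {k : ℤ} {n s : ℕ} (hs : s ≤ n) (hk : k = s - n) :
    Dop k (subPowTrunc n s) = (s : ℂ) • subPowTrunc n (s + 1) := by
  rw [Dop_subPowTrunc k hs, hk, subPowTrunc_succ]
  push_cast
  module

theorem Dcomp_subPowTrunc {n s p : ℕ} (hsp : s + p ≤ n) {k : ℤ} (hk : k = s + p - n) :
    Dcomp k p (subPowTrunc n s) = (s.ascFactorial (p + 1) : ℂ) • subPowTrunc n (s + p + 1) := by
  induction p generalizing k with
  | zero => simpa [Dcomp, Nat.ascFactorial_succ] using Dop_subPowTrunc_of_eq (by omega) hk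
  | succ p ih =>
    rw [Dcomp, Function.comp_apply, ih (by omega) (by rw [hk]; push_cast; ring), Dop_smul,
      Dop_subPowTrunc_of_eq (by omega) (by rw [hk]; push_cast; ring), smul_smul,
      Nat.ascFactorial_succ (k := p + 1)]
    push_cast
    ring_nf

/-- For `m ≥ 2`, with `𝔻_m = 𝔻_{-m, m-2}`:
`𝔻_m(τ^{2m-1}) = (m-1)! ∑_{r=0}^{m-1} (-1)^r C(2m-1, r) τ^{2m-1-r} τ̄^r`. -/
theorem Dm_apply_monomial (m : ℕ) (hm : 2 ≤ m) :
    Dcomp (-(m : ℤ)) (m - 2) ((X 0 : MvPolynomial (Fin 2) ℂ) ^ (2 * m - 1)) =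
      ((m - 1).factorial : ℂ) •
        ∑ r ∈ Finset.range m,
          ((-1 : ℂ) ^ r * ((2 * m - 1).choose r : ℂ)) •
            ((X 0 : MvPolynomial (Fin 2) ℂ) ^ (2 * m - 1 - r) * (X 1) ^ r) := by
  have h := Dcomp_subPowTrunc (n := 2 * m - 1) (s := 1) (p := m - 2) (by omega) (k := -m)
    (by push_cast [Nat.cast_sub hm, Nat.cast_sub (by omega : 1 ≤ 2 * m)]; ring)
  rwa [subPowTrunc_one, Nat.one_ascFactorial, show m - 2 + 1 = m - 1 by omega,
    show 1 + (m - 2) + 1 = m by omega] at h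
end

section
/- With 𝔻_{k,p} = D_k^+ ∘ D_{k-1}^+ ∘ ... ∘ D_{k-p}^+ where D_j^+ = j + (τ-τ̄)∂_τ, one has for every p ≥ 0 the expansion 𝔻_{k,p} = Σ_{r=0}^{p+1} r!·C(k,r)·C(p+1, p+1-r)·(τ-τ̄)^{p+1-r} ∂_τ^{p+1-r}, as operators on smooth functions of τ on the upper half-plane, where C denotes (formal) binomial coefficients. -/
open MvPolynomial

/-- The formal binomial coefficient `C(x, r) = x(x-1)⋯(x-r+1)/r!`. -/
noncomputable def fchoose (x : ℂ) (r : ℕ) : ℂ :=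
  (∏ i ∈ Finset.range r, (x - i)) / (r.factorial : ℂ)

/-! With `θ = w D` for a derivation `D` such that `D w = 1`, the Leibniz rule gives
`θ (w^m D^m) = m w^m D^m + w^(m+1) D^(m+1)`, so `w^m D^m` is the falling factorial
`θ (θ - 1) ⋯ (θ - m + 1)`. As `D_j⁺ = j + θ`, the composite `𝔻_{k,p}` is the falling
factorial of length `p + 1` evaluated at `k + θ`, and since the scalar `k` commutes with `θ`,
the Chu–Vandermonde identity for falling factorials expands it as
`∑ C(p+1, r) k(k-1)⋯(k-r+1) · w^(p+1-r) D^(p+1-r)`. -/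

section EulerOperator

variable {R A : Type*} [CommRing R] [CommRing A] [Algebra R A] (D : Derivation R A A) (w : A)

noncomputable def eulerOperator : Module.End R A :=
  LinearMap.mulLeft R w ∘ₗ D.toLinearMap

theorem eulerOperator_apply (a : A) : eulerOperator D w a = w * D a := rfl

variable {D w}

theorem eulerOperator_pow_mul_iterate (hw : D w = 1) (m : ℕ) (a : A) :
    eulerOperator D w (w ^ m * D^[m] a) = m • (w ^ m * D^[m] a) + w ^ (m + 1) * D^[m + 1] a := by
  rw [eulerOperator_apply, D.leibniz, D.leibniz_pow, hw, Function.iterate_succ_apply']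
  cases m with
  | zero => simp
  | succ m => simp only [smul_eq_mul, nsmul_eq_mul, Nat.add_sub_cancel]; ring

theorem pow_mul_iterate_eq_descPochhammer_smeval (hw : D w = 1) (m : ℕ) (a : A) :
    w ^ m * D^[m] a = (descPochhammer ℤ m).smeval (eulerOperator D w) a := by
  induction m with
  | zero => simp
  | succ m ih =>
    rw [descPochhammer_succ_right, mul_comm (descPochhammer ℤ m), Polynomial.smeval_mul,
      Polynomial.smeval_sub, Polynomial.smeval_X, Polynomial.smeval_natCast, Module.End.mul_apply,
      ← ih, LinearMap.sub_apply, pow_one, pow_zero, eulerOperator_pow_mul_iterate hw]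
    simp

theorem descPochhammer_smeval_algebraMap {S : Type*} [Ring S] [Algebra R S] (n : ℕ) (c : R) :
    (descPochhammer ℤ n).smeval (algebraMap R S c) =
      algebraMap R S ((descPochhammer ℤ n).smeval c) := by
  rw [← Polynomial.aeval_eq_smeval, ← Polynomial.aeval_eq_smeval,
    Polynomial.aeval_algebraMap_apply]

theorem descPochhammer_smeval_algebraMap_add_eulerOperator (hw : D w = 1) (c : R) (n : ℕ)
    (a : A) :
    (descPochhammer ℤ n).smeval (algebraMap R _ c + eulerOperator D w) a =
      ∑ r ∈ Finset.range (n + 1),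
        ((n.choose r : R) * (descPochhammer ℤ r).smeval c) • (w ^ (n - r) * D^[n - r] a) := by
  rw [Ring.descPochhammer_smeval_add n (Algebra.commute_algebraMap_left c _),
    Finset.Nat.sum_antidiagonal_eq_sum_range_succ_mk, LinearMap.sum_apply]
  refine Finset.sum_congr rfl fun r _ => ?_
  rw [descPochhammer_smeval_algebraMap, Module.End.mul_apply, Module.End.mul_apply,
    ← pow_mul_iterate_eq_descPochhammer_smeval hw, mul_smul]
  simp [Algebra.smul_def]

end EulerOperator

theorem descPochhammer_smeval_eq_factorial_mul_fchoose (x : ℂ) (r : ℕ) :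
    (descPochhammer ℤ r).smeval x = r.factorial * fchoose x r := by
  have hr : (r.factorial : ℂ) ≠ 0 := Nat.cast_ne_zero.mpr r.factorial_ne_zero
  rw [← Polynomial.aeval_eq_smeval, Polynomial.aeval_def, Polynomial.eval₂_eq_eval_map,
    descPochhammer_map, descPochhammer_eval_eq_prod_range, fchoose, mul_div_cancel₀ _ hr]

theorem pderiv_X_zero_sub_X_one :
    pderiv (0 : Fin 2) ((X 0 : MvPolynomial (Fin 2) ℂ) - X 1) = 1 := by
  simp

theorem Dop_eq_algebraMap_add_eulerOperator (k : ℤ) (P : MvPolynomial (Fin 2) ℂ) :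
    Dop k P = (algebraMap ℂ _ (k : ℂ) + eulerOperator (pderiv 0) (X 0 - X 1)) P := by
  simp [Dop, eulerOperator_apply, Algebra.smul_def]

theorem Dcomp_eq_descPochhammer_smeval (k : ℤ) (p : ℕ) (P : MvPolynomial (Fin 2) ℂ) :
    Dcomp k p P = (descPochhammer ℤ (p + 1)).smeval
      (algebraMap ℂ _ (k : ℂ) + eulerOperator (pderiv 0) (X 0 - X 1)) P := by
  induction p generalizing k P with
  | zero => simp [Dcomp, Dop_eq_algebraMap_add_eulerOperator]
  | succ p ih =>
    rw [descPochhammer_succ_left, Polynomial.smeval_mul, Polynomial.smeval_X,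
      Polynomial.smeval_comp, Polynomial.smeval_sub, Polynomial.smeval_X, Polynomial.smeval_one,
      Module.End.mul_apply, Dcomp, Function.comp_apply, ih, Dop_eq_algebraMap_add_eulerOperator]
    congr 3
    rw [Int.cast_sub, Int.cast_one, map_sub, map_one, pow_one, pow_zero, one_smul]
    abel

/-- `𝔻_{k,p} = ∑_{r=0}^{p+1} r! C(k,r) C(p+1, p+1-r) (τ-τ̄)^{p+1-r} ∂_τ^{p+1-r}`. -/
theorem Dcomp_expansion (k : ℤ) (p : ℕ) (P : MvPolynomial (Fin 2) ℂ) :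
    Dcomp k p P =
      ∑ r ∈ Finset.range (p + 2),
        ((r.factorial : ℂ) * fchoose (k : ℂ) r * ((p + 1).choose (p + 1 - r) : ℂ)) •
          (((X 0 : MvPolynomial (Fin 2) ℂ) - X 1) ^ (p + 1 - r) *
            (fun Q => pderiv (0 : Fin 2) Q)^[p + 1 - r] P) := by
  rw [Dcomp_eq_descPochhammer_smeval,
    descPochhammer_smeval_algebraMap_add_eulerOperator pderiv_X_zero_sub_X_one]
  refine Finset.sum_congr rfl fun r hr => ?_
  rw [descPochhammer_smeval_eq_factorial_mul_fchoose,
    Nat.choose_symm (Nat.lt_succ_iff.mp (Finset.mem_range.mp hr)), mul_comm]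
end
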